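/- Let u and v be nonadjacent vertices of a graph G and let G_{u,v,2} be obtained by adding a path u, x_1, x_2, v with two new internal vertices. Then γ(G) ≤ γ(G_{u,v,2}) ≤ γ(G) + 1, and γ(G_{u,v,2}) = γ(G) if and only if either some minimum dominating set of G contains both u and v, or at least one of u, v satisfies γ(G − w) < γ(G). -/
import Mathlib

/-- `D` is a dominating set of `G`: every vertex not in `D` has a neighbor in `D`. -/
def isDomSet {V : Type*} (G : SimpleGraph V) (D : Finset V) : Prop :=
  ∀ v, v ∉ D → ∃ u ∈ D, G.Adj u v

/-- The domination number: minimum cardinality of a dominating set. -/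
noncomputable def domNum {V : Type*} (G : SimpleGraph V) : ℕ :=
  sInf {n | ∃ D : Finset V, D.card = n ∧ isDomSet G D}

/-- The `(u,v)`-path-addition graph `G_{u,v,k}`: add an internally disjoint path with
`k` internal vertices between `u` and `v`. -/
noncomputable def pathAdd {V : Type*} (G : SimpleGraph V) (u v : V) (k : ℕ) :
    SimpleGraph (V ⊕ Fin k) :=
  SimpleGraph.fromRel (fun a b =>
    match a, b with
    | Sum.inl x, Sum.inl y => G.Adj x y
    | Sum.inl x, Sum.inr i => (x = u ∧ (i : ℕ) = 0) ∨ (x = v ∧ (i : ℕ) = k - 1)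
    | Sum.inr _, Sum.inl _ => False
    | Sum.inr i, Sum.inr j => (j : ℕ) = (i : ℕ) + 1)

section Helpers

variable {V : Type*}

lemma domNum_le [Fintype V] (G : SimpleGraph V) {D : Finset V} (hD : isDomSet G D) :
    domNum G ≤ D.card :=
  Nat.sInf_le ⟨D, rfl, hD⟩

lemma domNum_spec [Fintype V] (G : SimpleGraph V) :
    ∃ D : Finset V, isDomSet G D ∧ D.card = domNum G := by
  have hne : {n | ∃ D : Finset V, D.card = n ∧ isDomSet G D}.Nonempty :=
    ⟨Finset.univ.card, Finset.univ, rfl, fun w hw => absurd (Finset.mem_univ w) hw⟩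
  obtain ⟨D, hc, hd⟩ := Nat.sInf_mem hne
  exact ⟨D, hd, hc⟩

variable (G : SimpleGraph V) (u v : V)

lemma pa_inl_inl {x y : V} :
    (pathAdd G u v 2).Adj (Sum.inl x) (Sum.inl y) ↔ G.Adj x y := by
  constructor
  · rintro ⟨-, h | h⟩
    · exact h
    · exact h.symm
  · exact fun hxy => ⟨by simp [hxy.ne], Or.inl hxy⟩

lemma pa_inl_inr {x : V} {i : Fin 2} :
    (pathAdd G u v 2).Adj (Sum.inl x) (Sum.inr i) ↔ (x = u ∧ i = 0) ∨ (x = v ∧ i = 1) := by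
  constructor
  · rintro ⟨-, (⟨hx, hi⟩ | ⟨hx, hi⟩) | h⟩
    · exact Or.inl ⟨hx, Fin.ext hi⟩
    · exact Or.inr ⟨hx, Fin.ext (by omega)⟩
    · exact h.elim
  · rintro (⟨hx, hi⟩ | ⟨hx, hi⟩)
    · exact ⟨by simp, Or.inl (Or.inl ⟨hx, by simp [hi]⟩)⟩
    · exact ⟨by simp, Or.inl (Or.inr ⟨hx, by simp [hi]⟩)⟩

lemma pa_inr_inl {x : V} {i : Fin 2} :
    (pathAdd G u v 2).Adj (Sum.inr i) (Sum.inl x) ↔ (x = u ∧ i = 0) ∨ (x = v ∧ i = 1) :=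
  ⟨fun hadj => (pa_inl_inr G u v).1 hadj.symm,
   fun hh => ((pa_inl_inr G u v).2 hh).symm⟩

lemma pa_inr_inr {i j : Fin 2} :
    (pathAdd G u v 2).Adj (Sum.inr i) (Sum.inr j) ↔ i ≠ j := by
  constructor
  · rintro ⟨hne, -⟩
    exact fun hij => hne (by rw [hij])
  · intro hij
    refine ⟨by simpa using hij, ?_⟩
    have h1 : (i : ℕ) < 2 := i.isLt
    have h2 : (j : ℕ) < 2 := j.isLt
    have : (i : ℕ) ≠ (j : ℕ) := fun hv => hij (Fin.ext hv)
    omega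

/-- Lower bound: `γ(G) ≤ γ(G_{u,v,2})`. -/
lemma domNum_le_pathAdd [Fintype V] : domNum G ≤ domNum (pathAdd G u v 2) := by
  classical
  obtain ⟨T, hT, hTc⟩ := domNum_spec (pathAdd G u v 2)
  set f : V ⊕ Fin 2 → V := Sum.elim id (fun i => if i = 0 then u else v) with hf
  have hdom : isDomSet G (T.image f) := by
    intro w hw
    have hwT : Sum.inl w ∉ T := fun hmem => hw (Finset.mem_image.2 ⟨Sum.inl w, hmem, rfl⟩)
    obtain ⟨a, haT, hadj⟩ := hT (Sum.inl w) hwT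
    rcases a with y | i
    · exact ⟨y, Finset.mem_image.2 ⟨Sum.inl y, haT, rfl⟩, (pa_inl_inl G u v).1 hadj⟩
    · rcases (pa_inr_inl G u v).1 hadj with ⟨hwu, hi⟩ | ⟨hwv, hi⟩
      · exact absurd (Finset.mem_image.2 ⟨Sum.inr i, haT, by simp [hf, hi, hwu.symm]⟩) hw
      · exact absurd (Finset.mem_image.2 ⟨Sum.inr i, haT, by simp [hf, hi, hwv.symm]⟩) hw
  calc domNum G ≤ (T.image f).card := domNum_le G hdom
    _ ≤ T.card := Finset.card_image_le
    _ = domNum (pathAdd G u v 2) := hTc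

/-- If `D` dominates `G` and contains both `u` and `v`, its copy dominates `G_{u,v,2}`. -/
lemma domNum_pathAdd_le_of_uv [Fintype V] {D : Finset V} (hD : isDomSet G D)
    (hu : u ∈ D) (hv : v ∈ D) : domNum (pathAdd G u v 2) ≤ D.card := by
  classical
  have hdom : isDomSet (pathAdd G u v 2) (D.image Sum.inl) := by
    rintro (w | i) hw
    · have hwD : w ∉ D := fun hmem => hw (Finset.mem_image.2 ⟨w, hmem, rfl⟩)
      obtain ⟨y, hyD, hadj⟩ := hD w hwD
      exact ⟨Sum.inl y, Finset.mem_image.2 ⟨y, hyD, rfl⟩, (pa_inl_inl G u v).2 hadj⟩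
    · by_cases hi : i = 0
      · exact ⟨Sum.inl u, Finset.mem_image.2 ⟨u, hu, rfl⟩,
          (pa_inl_inr G u v).2 (Or.inl ⟨rfl, hi.symm ▸ rfl⟩)⟩
      · have hi1 : i = 1 := by omega
        exact ⟨Sum.inl v, Finset.mem_image.2 ⟨v, hv, rfl⟩,
          (pa_inl_inr G u v).2 (Or.inr ⟨rfl, hi1.symm ▸ rfl⟩)⟩
  calc domNum (pathAdd G u v 2) ≤ (D.image Sum.inl).card := domNum_le _ hdom
    _ ≤ D.card := Finset.card_image_le

/-- A dominating set of `G - u` plus the first internal vertex dominates `G_{u,v,2}`. -/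
lemma domNum_pathAdd_le_of_del_u [Fintype V]
    {D0 : Finset ({w | w ≠ u} : Set V)} (hD0 : isDomSet (G.induce {w | w ≠ u}) D0) :
    domNum (pathAdd G u v 2) ≤ D0.card + 1 := by
  classical
  set T : Finset (V ⊕ Fin 2) :=
    insert (Sum.inr 0) (D0.image fun a => Sum.inl a.1) with hT
  have hdom : isDomSet (pathAdd G u v 2) T := by
    rintro (w | i) hw
    · by_cases hwu : w = u
      · exact ⟨Sum.inr 0, Finset.mem_insert_self _ _,
          (pa_inr_inl G u v).2 (Or.inl ⟨hwu, rfl⟩)⟩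
      · have hwD : (⟨w, hwu⟩ : ({w | w ≠ u} : Set V)) ∉ D0 := by
          intro hmem
          exact hw (Finset.mem_insert_of_mem (Finset.mem_image.2 ⟨_, hmem, rfl⟩))
        obtain ⟨y, hyD, hadj⟩ := hD0 _ hwD
        exact ⟨Sum.inl (y : V), Finset.mem_insert_of_mem (Finset.mem_image.2 ⟨y, hyD, rfl⟩),
          (pa_inl_inl G u v).2 hadj⟩
    · by_cases hi : i = 0
      · subst hi
        exact absurd (Finset.mem_insert_self (Sum.inr 0) _) hw
      · have hi1 : i ≠ 0 := hi
        exact ⟨Sum.inr 0, Finset.mem_insert_self _ _, (pa_inr_inr G u v).2 (Ne.symm hi1)⟩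
  calc domNum (pathAdd G u v 2) ≤ T.card := domNum_le _ hdom
    _ ≤ (D0.image fun a => Sum.inl a.1).card + 1 := Finset.card_insert_le _ _
    _ ≤ D0.card + 1 := by gcongr; exact Finset.card_image_le

/-- A dominating set of `G - v` plus the second internal vertex dominates `G_{u,v,2}`. -/
lemma domNum_pathAdd_le_of_del_v [Fintype V]
    {D0 : Finset ({w | w ≠ v} : Set V)} (hD0 : isDomSet (G.induce {w | w ≠ v}) D0) :
    domNum (pathAdd G u v 2) ≤ D0.card + 1 := by
  classical
  set T : Finset (V ⊕ Fin 2) :=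
    insert (Sum.inr 1) (D0.image fun a => Sum.inl a.1) with hT
  have hdom : isDomSet (pathAdd G u v 2) T := by
    rintro (w | i) hw
    · by_cases hwv : w = v
      · exact ⟨Sum.inr 1, Finset.mem_insert_self _ _,
          (pa_inr_inl G u v).2 (Or.inr ⟨hwv, rfl⟩)⟩
      · have hwD : (⟨w, hwv⟩ : ({w | w ≠ v} : Set V)) ∉ D0 := by
          intro hmem
          exact hw (Finset.mem_insert_of_mem (Finset.mem_image.2 ⟨_, hmem, rfl⟩))
        obtain ⟨y, hyD, hadj⟩ := hD0 _ hwD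
        exact ⟨Sum.inl (y : V), Finset.mem_insert_of_mem (Finset.mem_image.2 ⟨y, hyD, rfl⟩),
          (pa_inl_inl G u v).2 hadj⟩
    · by_cases hi : i = 1
      · subst hi
        exact absurd (Finset.mem_insert_self (Sum.inr 1) _) hw
      · have hi1 : i ≠ 1 := hi
        exact ⟨Sum.inr 1, Finset.mem_insert_self _ _, (pa_inr_inr G u v).2 (Ne.symm hi1)⟩
  calc domNum (pathAdd G u v 2) ≤ T.card := domNum_le _ hdom
    _ ≤ (D0.image fun a => Sum.inl a.1).card + 1 := Finset.card_insert_le _ _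
    _ ≤ D0.card + 1 := by gcongr; exact Finset.card_image_le

end Helpers

theorem stmt15 {V : Type*} [Fintype V] (G : SimpleGraph V) (u v : V)
    (hne : u ≠ v) (h : ¬G.Adj u v) :
    domNum G ≤ domNum (pathAdd G u v 2) ∧
    domNum (pathAdd G u v 2) ≤ domNum G + 1 ∧
    (domNum (pathAdd G u v 2) = domNum G ↔
      ((∃ D : Finset V, isDomSet G D ∧ D.card = domNum G ∧ u ∈ D ∧ v ∈ D) ∨
        domNum (G.induce {w | w ≠ u}) < domNum G ∨
        domNum (G.induce {w | w ≠ v}) < domNum G)) := by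
  classical
  have hlow : domNum G ≤ domNum (pathAdd G u v 2) := domNum_le_pathAdd G u v
  -- Upper bound: γ(H) ≤ γ(G) + 1
  have hup : domNum (pathAdd G u v 2) ≤ domNum G + 1 := by
    obtain ⟨D, hD, hDc⟩ := domNum_spec G
    have hdom : isDomSet (pathAdd G u v 2) (insert (Sum.inr 0) (D.image Sum.inl)) := by
      rintro (w | i) hw
      · have hwD : w ∉ D := fun hmem =>
          hw (Finset.mem_insert_of_mem (Finset.mem_image.2 ⟨w, hmem, rfl⟩))
        obtain ⟨y, hyD, hadj⟩ := hD w hwD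
        exact ⟨Sum.inl y, Finset.mem_insert_of_mem (Finset.mem_image.2 ⟨y, hyD, rfl⟩),
          (pa_inl_inl G u v).2 hadj⟩
      · by_cases hi : i = 0
        · subst hi
          exact absurd (Finset.mem_insert_self (Sum.inr 0) _) hw
        · exact ⟨Sum.inr 0, Finset.mem_insert_self _ _, (pa_inr_inr G u v).2 (Ne.symm hi)⟩
    calc domNum (pathAdd G u v 2) ≤ _ := domNum_le _ hdom
      _ ≤ (D.image Sum.inl).card + 1 := Finset.card_insert_le _ _
      _ ≤ D.card + 1 := by gcongr; exact Finset.card_image_le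
      _ = domNum G + 1 := by rw [hDc]
  refine ⟨hlow, hup, ?_, ?_⟩
  · -- forward direction
    intro hEq
    obtain ⟨T, hT, hTc⟩ := domNum_spec (pathAdd G u v 2)
    rw [hEq] at hTc
    set P : Finset V := Finset.univ.filter (fun w => Sum.inl w ∈ T) with hP
    have hmemP : ∀ w : V, w ∈ P ↔ Sum.inl w ∈ T := by
      intro w; simp [hP]
    have hPsub : P.image Sum.inl ⊆ T := by
      intro a ha
      obtain ⟨w, hwP, rfl⟩ := Finset.mem_image.1 ha
      exact (hmemP w).1 hwP
    have hPcard : P.card = (P.image Sum.inl).card :=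
      (Finset.card_image_of_injective P (Sum.inl_injective : Function.Injective (Sum.inl : V → V ⊕ Fin 2))).symm
    by_cases h0 : Sum.inr (0 : Fin 2) ∈ T <;> by_cases h1 : Sum.inr (1 : Fin 2) ∈ T
    · -- both internal vertices in T : min dom set with u and v
      left
      set D : Finset V := insert u (insert v P) with hD
      have hdom : isDomSet G D := by
        intro w hw
        have hwu : w ≠ u := fun hh => hw (hh ▸ Finset.mem_insert_self u _)
        have hwv : w ≠ v := fun hh =>
          hw (hh ▸ Finset.mem_insert_of_mem (Finset.mem_insert_self v _))
        have hwT : Sum.inl w ∉ T := fun hmem =>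
          hw (Finset.mem_insert_of_mem (Finset.mem_insert_of_mem ((hmemP w).2 hmem)))
        obtain ⟨a, haT, hadj⟩ := hT (Sum.inl w) hwT
        rcases a with y | i
        · exact ⟨y, Finset.mem_insert_of_mem (Finset.mem_insert_of_mem
            ((hmemP y).2 haT)), (pa_inl_inl G u v).1 hadj⟩
        · rcases (pa_inr_inl G u v).1 hadj with ⟨hwu', -⟩ | ⟨hwv', -⟩
          · exact absurd hwu' hwu
          · exact absurd hwv' hwv
      -- card bound : P maps into T minus the two internal vertices
      have hsub2 : P.image Sum.inl ⊆ (T.erase (Sum.inr 0)).erase (Sum.inr 1) := by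
        intro a ha
        obtain ⟨w, hwP, rfl⟩ := Finset.mem_image.1 ha
        exact Finset.mem_erase.2 ⟨by simp, Finset.mem_erase.2 ⟨by simp, (hmemP w).1 hwP⟩⟩
      have hcard2 : P.card + 2 ≤ T.card := by
        have h1' : Sum.inr (1 : Fin 2) ∈ T.erase (Sum.inr 0) :=
          Finset.mem_erase.2 ⟨by simp, h1⟩
        have := Finset.card_le_card hsub2
        rw [Finset.card_erase_of_mem h1', Finset.card_erase_of_mem h0] at this
        have hT2 : 2 ≤ T.card := by
          have : ({Sum.inr 0, Sum.inr 1} : Finset (V ⊕ Fin 2)) ⊆ T := by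
            intro a ha
            rcases Finset.mem_insert.1 ha with rfl | ha
            · exact h0
            · rw [Finset.mem_singleton.1 ha]; exact h1
          calc 2 = ({Sum.inr 0, Sum.inr 1} : Finset (V ⊕ Fin 2)).card := by simp
            _ ≤ T.card := Finset.card_le_card this
        omega
      have hDcard : D.card ≤ domNum G := by
        calc D.card ≤ P.card + 2 := by
              calc D.card ≤ (insert v P).card + 1 := Finset.card_insert_le _ _
                _ ≤ (P.card + 1) + 1 := by
                    have := Finset.card_insert_le v P; omega
                _ = P.card + 2 := by omega
          _ ≤ T.card := by rw [hPcard] at hcard2 ⊢; exact hcard2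
          _ = domNum G := hTc
      have hDcard' : D.card = domNum G := le_antisymm hDcard (domNum_le G hdom)
      exact ⟨D, hdom, hDcard', Finset.mem_insert_self u _,
        Finset.mem_insert_of_mem (Finset.mem_insert_self v _)⟩
    · -- x₁ ∈ T, x₂ ∉ T
      by_cases hu : Sum.inl u ∈ T
      · -- min dom set containing u and v : P ∪ {v}
        left
        set D : Finset V := insert v P with hD
        have huP : u ∈ P := (hmemP u).2 hu
        have hdom : isDomSet G D := by
          intro w hw
          have hwv : w ≠ v := fun hh => hw (hh ▸ Finset.mem_insert_self v _)
          have hwP : w ∉ P := fun hh => hw (Finset.mem_insert_of_mem hh)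
          have hwT : Sum.inl w ∉ T := fun hmem => hwP ((hmemP w).2 hmem)
          obtain ⟨a, haT, hadj⟩ := hT (Sum.inl w) hwT
          rcases a with y | i
          · exact ⟨y, Finset.mem_insert_of_mem ((hmemP y).2 haT), (pa_inl_inl G u v).1 hadj⟩
          · rcases (pa_inr_inl G u v).1 hadj with ⟨hwu', hi⟩ | ⟨hwv', -⟩
            · exact absurd (hwu' ▸ huP) (fun hh => hw (Finset.mem_insert_of_mem hh))
            · exact absurd hwv' hwv
        have hsub1 : P.image Sum.inl ⊆ T.erase (Sum.inr 0) := by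
          intro a ha
          obtain ⟨w, hwP, rfl⟩ := Finset.mem_image.1 ha
          exact Finset.mem_erase.2 ⟨by simp, (hmemP w).1 hwP⟩
        have hcard1 : P.card + 1 ≤ T.card := by
          have := Finset.card_le_card hsub1
          rw [Finset.card_erase_of_mem h0] at this
          have hT1 : 1 ≤ T.card := Finset.card_pos.2 ⟨_, h0⟩
          rw [← hPcard] at this
          omega
        have hDcard : D.card ≤ domNum G := by
          calc D.card ≤ P.card + 1 := Finset.card_insert_le _ _
            _ ≤ T.card := hcard1
            _ = domNum G := hTc
        have hDcard' : D.card = domNum G := le_antisymm hDcard (domNum_le G hdom)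
        exact ⟨D, hdom, hDcard', Finset.mem_insert_of_mem huP, Finset.mem_insert_self v _⟩
      · -- γ(G − u) < γ(G)
        right; left
        set D0 : Finset ({w | w ≠ u} : Set V) :=
          P.subtype (fun w => w ∈ ({w | w ≠ u} : Set V)) with hD0
        have hmemD0 : ∀ a : ({w | w ≠ u} : Set V), a ∈ D0 ↔ (a : V) ∈ P := by
          intro a; simp [hD0]
        have hdom0 : isDomSet (G.induce {w | w ≠ u}) D0 := by
          rintro ⟨w, hw⟩ hnmem
          have hwP : w ∉ P := fun hh => hnmem ((hmemD0 _).2 hh)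
          have hwT : Sum.inl w ∉ T := fun hmem => hwP ((hmemP w).2 hmem)
          obtain ⟨a, haT, hadj⟩ := hT (Sum.inl w) hwT
          rcases a with y | i
          · have hyP : y ∈ P := (hmemP y).2 haT
            have hyu : y ≠ u := fun hh => hu (hh ▸ haT)
            exact ⟨⟨y, hyu⟩, (hmemD0 _).2 hyP, (pa_inl_inl G u v).1 hadj⟩
          · rcases (pa_inr_inl G u v).1 hadj with ⟨hwu', -⟩ | ⟨hwv', hi⟩
            · exact absurd hwu' hw
            · exact absurd (hi ▸ haT) h1
        have hD0card : D0.card ≤ P.card := by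
          rw [hD0, Finset.card_subtype]
          exact Finset.card_le_card (Finset.filter_subset _ _)
        have hsub1 : P.image Sum.inl ⊆ T.erase (Sum.inr 0) := by
          intro a ha
          obtain ⟨w, hwP, rfl⟩ := Finset.mem_image.1 ha
          exact Finset.mem_erase.2 ⟨by simp, (hmemP w).1 hwP⟩
        have hcard1 : P.card + 1 ≤ T.card := by
          have := Finset.card_le_card hsub1
          rw [Finset.card_erase_of_mem h0] at this
          have hT1 : 1 ≤ T.card := Finset.card_pos.2 ⟨_, h0⟩
          rw [← hPcard] at this
          omega
        calc domNum (G.induce {w | w ≠ u}) ≤ D0.card := domNum_le _ hdom0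
          _ ≤ P.card := hD0card
          _ < T.card := by omega
          _ = domNum G := hTc
    · -- x₂ ∈ T, x₁ ∉ T
      by_cases hv : Sum.inl v ∈ T
      · -- min dom set containing u and v : P ∪ {u}
        left
        set D : Finset V := insert u P with hD
        have hvP : v ∈ P := (hmemP v).2 hv
        have hdom : isDomSet G D := by
          intro w hw
          have hwu : w ≠ u := fun hh => hw (hh ▸ Finset.mem_insert_self u _)
          have hwP : w ∉ P := fun hh => hw (Finset.mem_insert_of_mem hh)
          have hwT : Sum.inl w ∉ T := fun hmem => hwP ((hmemP w).2 hmem)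
          obtain ⟨a, haT, hadj⟩ := hT (Sum.inl w) hwT
          rcases a with y | i
          · exact ⟨y, Finset.mem_insert_of_mem ((hmemP y).2 haT), (pa_inl_inl G u v).1 hadj⟩
          · rcases (pa_inr_inl G u v).1 hadj with ⟨hwu', -⟩ | ⟨hwv', hi⟩
            · exact absurd hwu' hwu
            · exact absurd (hwv' ▸ hvP) hwP
        have hsub1 : P.image Sum.inl ⊆ T.erase (Sum.inr 1) := by
          intro a ha
          obtain ⟨w, hwP, rfl⟩ := Finset.mem_image.1 ha
          exact Finset.mem_erase.2 ⟨by simp, (hmemP w).1 hwP⟩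
        have hcard1 : P.card + 1 ≤ T.card := by
          have := Finset.card_le_card hsub1
          rw [Finset.card_erase_of_mem h1] at this
          have hT1 : 1 ≤ T.card := Finset.card_pos.2 ⟨_, h1⟩
          rw [← hPcard] at this
          omega
        have hDcard : D.card ≤ domNum G := by
          calc D.card ≤ P.card + 1 := Finset.card_insert_le _ _
            _ ≤ T.card := hcard1
            _ = domNum G := hTc
        have hDcard' : D.card = domNum G := le_antisymm hDcard (domNum_le G hdom)
        exact ⟨D, hdom, hDcard', Finset.mem_insert_self u _, Finset.mem_insert_of_mem hvP⟩
      · -- γ(G − v) < γ(G)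
        right; right
        set D0 : Finset ({w | w ≠ v} : Set V) :=
          P.subtype (fun w => w ∈ ({w | w ≠ v} : Set V)) with hD0
        have hmemD0 : ∀ a : ({w | w ≠ v} : Set V), a ∈ D0 ↔ (a : V) ∈ P := by
          intro a; simp [hD0]
        have hdom0 : isDomSet (G.induce {w | w ≠ v}) D0 := by
          rintro ⟨w, hw⟩ hnmem
          have hwP : w ∉ P := fun hh => hnmem ((hmemD0 _).2 hh)
          have hwT : Sum.inl w ∉ T := fun hmem => hwP ((hmemP w).2 hmem)
          obtain ⟨a, haT, hadj⟩ := hT (Sum.inl w) hwT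
          rcases a with y | i
          · have hyP : y ∈ P := (hmemP y).2 haT
            have hyv : y ≠ v := fun hh => hv (hh ▸ haT)
            exact ⟨⟨y, hyv⟩, (hmemD0 _).2 hyP, (pa_inl_inl G u v).1 hadj⟩
          · rcases (pa_inr_inl G u v).1 hadj with ⟨hwu', hi⟩ | ⟨hwv', -⟩
            · exact absurd (hi ▸ haT) h0
            · exact absurd hwv' hw
        have hD0card : D0.card ≤ P.card := by
          rw [hD0, Finset.card_subtype]
          exact Finset.card_le_card (Finset.filter_subset _ _)
        have hsub1 : P.image Sum.inl ⊆ T.erase (Sum.inr 1) := by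
          intro a ha
          obtain ⟨w, hwP, rfl⟩ := Finset.mem_image.1 ha
          exact Finset.mem_erase.2 ⟨by simp, (hmemP w).1 hwP⟩
        have hcard1 : P.card + 1 ≤ T.card := by
          have := Finset.card_le_card hsub1
          rw [Finset.card_erase_of_mem h1] at this
          have hT1 : 1 ≤ T.card := Finset.card_pos.2 ⟨_, h1⟩
          rw [← hPcard] at this
          omega
        calc domNum (G.induce {w | w ≠ v}) ≤ D0.card := domNum_le _ hdom0
          _ ≤ P.card := hD0card
          _ < T.card := by omega
          _ = domNum G := hTc
    · -- neither internal vertex in T : T contains inl u and inl v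
      left
      have hu : Sum.inl u ∈ T := by
        obtain ⟨a, haT, hadj⟩ := hT (Sum.inr 0) h0
        rcases a with y | i
        · rcases (pa_inl_inr G u v).1 hadj with ⟨rfl, -⟩ | ⟨rfl, hh⟩
          · exact haT
          · exact absurd hh (by decide)
        · have : i = 0 ∨ i = 1 := by omega
          rcases this with rfl | rfl
          · exact absurd haT h0
          · exact absurd haT h1
      have hv : Sum.inl v ∈ T := by
        obtain ⟨a, haT, hadj⟩ := hT (Sum.inr 1) h1
        rcases a with y | i
        · rcases (pa_inl_inr G u v).1 hadj with ⟨rfl, hh⟩ | ⟨rfl, -⟩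
          · exact absurd hh (by decide)
          · exact haT
        · have : i = 0 ∨ i = 1 := by omega
          rcases this with rfl | rfl
          · exact absurd haT h0
          · exact absurd haT h1
      have hdom : isDomSet G P := by
        intro w hw
        have hwT : Sum.inl w ∉ T := fun hmem => hw ((hmemP w).2 hmem)
        obtain ⟨a, haT, hadj⟩ := hT (Sum.inl w) hwT
        rcases a with y | i
        · exact ⟨y, (hmemP y).2 haT, (pa_inl_inl G u v).1 hadj⟩
        · have : i = 0 ∨ i = 1 := by omega
          rcases this with rfl | rfl
          · exact absurd haT h0
          · exact absurd haT h1
      have hPc : P.card ≤ domNum G := by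
        calc P.card = (P.image Sum.inl).card := hPcard
          _ ≤ T.card := Finset.card_le_card hPsub
          _ = domNum G := hTc
      exact ⟨P, hdom, le_antisymm hPc (domNum_le G hdom), (hmemP u).2 hu, (hmemP v).2 hv⟩
  · -- backward direction
    rintro (⟨D, hD, hDc, hu, hv⟩ | hless | hless)
    · exact le_antisymm (hDc ▸ domNum_pathAdd_le_of_uv G u v hD hu hv) hlow
    · obtain ⟨D0, hD0, hD0c⟩ := domNum_spec (G.induce {w | w ≠ u})
      have : domNum (pathAdd G u v 2) ≤ D0.card + 1 :=
        domNum_pathAdd_le_of_del_u G u v hD0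
      have hlt : D0.card + 1 ≤ domNum G := by rw [hD0c]; omega
      exact le_antisymm (le_trans this hlt) hlow
    · obtain ⟨D0, hD0, hD0c⟩ := domNum_spec (G.induce {w | w ≠ v})
      have : domNum (pathAdd G u v 2) ≤ D0.card + 1 :=
        domNum_pathAdd_le_of_del_v G u v hD0
      have hlt : D0.card + 1 ≤ domNum G := by rw [hD0c]; omega
      exact le_antisymm (le_trans this hlt) hlow
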